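/- For any given s ∈ (0, 1/2) and k ∈ (3/2, 3), the polynomial system F(μ,σ,s) = 0, G(μ,σ,k) = 0 has a real solution (μ, σ) with σ > 0, where F(μ,σ,s) = −μ³ − 3μσ² − sσ³ + (3/2)μ² + (3/2)σ² − (9/14)μ + 1/14 and G(μ,σ,k) = 3μ⁴ + 6μ²σ² − kσ⁴ − 6μ³ − 6μσ² + (89/21)μ² + (5/3)σ² − (26/21)μ + 5/42. -/
import Mathlib


/-- Proposition 1: for `s ∈ (0, 1/2)` and `k ∈ (3/2, 3)`, the system
`F(μ,σ,s) = 0`, `G(μ,σ,k) = 0` has a real solution with `σ > 0`. -/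
theorem stmt_12 (s k : ℝ) (hs : s ∈ Set.Ioo (0:ℝ) (1/2))
    (hk : k ∈ Set.Ioo (3/2:ℝ) 3) :
    ∃ μ σ : ℝ, 0 < σ ∧
      (-μ^3 - 3*μ*σ^2 - s*σ^3 + (3/2)*μ^2 + (3/2)*σ^2 - (9/14)*μ + 1/14 = 0) ∧
      (3*μ^4 + 6*μ^2*σ^2 - k*σ^4 - 6*μ^3 - 6*μ*σ^2 + (89/21)*μ^2 + (5/3)*σ^2
          - (26/21)*μ + 5/42 = 0) := by
  obtain ⟨hs0, hs1⟩ := hs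
  obtain ⟨hk0, hk1⟩ := hk
  -- the sextic
  set g : ℝ → ℝ := fun M => 8*M^6 - 36*M^4 - 80*s*M^3 + (63-27*k)*M^2 - 7*s^2 with hgdef
  have hcont : ContinuousOn g (Set.Icc (0:ℝ) 3) := by
    apply Continuous.continuousOn
    fun_prop
  have h0 : g 0 < 0 := by
    simp only [hgdef]
    nlinarith
  have h3 : (0:ℝ) < g 3 := by
    simp only [hgdef]
    nlinarith
  have hmem : (0:ℝ) ∈ Set.Ioo (g 0) (g 3) := ⟨h0, h3⟩
  obtain ⟨M, hM, hgM⟩ := intermediate_value_Ioo (by norm_num : (0:ℝ) ≤ 3) hcont hmem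
  obtain ⟨hM0, hM3⟩ := hM
  simp only [hgdef] at hgM
  have hden : (0:ℝ) < M^3 + 3*M + s := by nlinarith
  set t : ℝ := (3*M/28)/(M^3+3*M+s) with ht
  have htpos : 0 < t := div_pos (by linarith) hden
  have htden : (M^3+3*M+s)*t = 3*M/28 := by
    rw [ht, mul_div_cancel₀ _ (ne_of_gt hden)]
  set σ := Real.sqrt t with hσdef
  have hσpos : 0 < σ := Real.sqrt_pos.mpr htpos
  have hsq : σ^2 = t := Real.sq_sqrt htpos.le
  refine ⟨1/2 + M*σ, σ, hσpos, ?_, ?_⟩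
  · linear_combination (-(M^3+3*M+s)*σ)*hsq + (-σ)*htden
  · have hden2 : (M^3+3*M+s)^2 ≠ 0 := by positivity
    have key : (M^3+3*M+s)^2 *
        (3*(1/2 + M*σ)^4 + 6*(1/2 + M*σ)^2*σ^2 - k*σ^4 - 6*(1/2 + M*σ)^3
          - 6*(1/2 + M*σ)*σ^2 + (89/21)*(1/2 + M*σ)^2 + (5/3)*σ^2
          - (26/21)*(1/2 + M*σ) + 5/42) = 0 := by
      linear_combination
        ((M^3+3*M+s)^2*((1/6 - 11*M^2/42) + (3*M^4+6*M^2-k)*(σ^2+t)))*hsq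
        + ((3*M^4+6*M^2-k)*((M^3+3*M+s)*t + 3*M/28)
            + (1/6 - 11*M^2/42)*(M^3+3*M+s))*htden
        + (1/2352)*hgM
    exact (mul_eq_zero.mp key).resolve_left hden2
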